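/- Let γ > 0, λ̃_1 λ̃_2 > 0, and λ_1 > 0 > λ_2. Then the derivative of ε ↦ λ(ε,γ) is strictly positive for all ε > 0 (where the denominator is nonzero), λ(0,γ) = λ_2 < 0, and λ(ε,γ) → λ_1 > 0 as ε → ∞; hence by continuity there exists ε̃ > 0 with λ(ε̃,γ) = 0. -/

import Mathlib

/-! By the quotient rule the numerator of `λ'(ε)` factors as `λ̃₁ λ̃₂ (λ₁ - λ₂) (γ ε² + 2 ε + γ)`,
which is positive for `ε > 0`. Since `λ(0) = λ₂ < 0` and `λ` tends to the ratio `λ₁` of the leading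
coefficients, the intermediate value theorem gives the zero. -/

open Filter Topology Set

theorem hasDerivAt_quadratic (a b c x : ℝ) :
    HasDerivAt (fun x => a * x ^ 2 + b * x + c) (2 * a * x + b) x := by
  refine ((((hasDerivAt_id' x).pow 2).const_mul a).add
    ((hasDerivAt_id' x).const_mul b)).add_const c |>.congr_deriv ?_
  ring

theorem hasDerivAt_quadratic_div_quadratic (a b c d e f x : ℝ)
    (hx : d * x ^ 2 + e * x + f ≠ 0) :
    HasDerivAt (fun x => (a * x ^ 2 + b * x + c) / (d * x ^ 2 + e * x + f))
      (((a * e - b * d) * x ^ 2 + 2 * (a * f - c * d) * x + (b * f - c * e))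
        / (d * x ^ 2 + e * x + f) ^ 2) x := by
  refine ((hasDerivAt_quadratic a b c x).div (hasDerivAt_quadratic d e f x) hx).congr_deriv ?_
  ring

theorem tendsto_quadratic_div_quadratic_atTop (a b c d e f : ℝ) (hd : d ≠ 0) :
    Tendsto (fun x => (a * x ^ 2 + b * x + c) / (d * x ^ 2 + e * x + f)) atTop (𝓝 (a / d)) := by
  have hvanish (u v : ℝ) : Tendsto (fun x : ℝ => u / x + v / x ^ 2) atTop (𝓝 0) := by
    simpa using (tendsto_const_nhds.div_atTop tendsto_id).add
      (tendsto_const_nhds.div_atTop (tendsto_pow_atTop (α := ℝ) two_ne_zero))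
  have hlim := ((hvanish b c).const_add a).div ((hvanish e f).const_add d) (by simpa using hd)
  rw [add_zero, add_zero] at hlim
  refine hlim.congr' ?_
  filter_upwards [eventually_ne_atTop 0] with x hx
  simp only [Pi.div_apply]
  field_simp
  ring

theorem exists_gt_eq_of_continuousOn_Ici_of_tendsto {f : ℝ → ℝ} {a y L : ℝ}
    (hf : ContinuousOn f (Ici a)) (hfa : f a < y) (hlim : Tendsto f atTop (𝓝 L)) (hyL : y < L) :
    ∃ e, a < e ∧ f e = y := by
  obtain ⟨b, hb, hab⟩ := ((hlim.eventually (eventually_gt_nhds hyL)).and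
    (eventually_gt_atTop a)).exists
  obtain ⟨e, he, hfe⟩ := intermediate_value_Ioo hab.le (hf.mono Icc_subset_Ici_self) ⟨hfa, hb⟩
  exact ⟨e, he.1, hfe⟩

theorem stmt11 (l1 l2 t1 t2 γ : ℝ) (ht : t1 * t2 > 0) (hγ : γ > 0)
    (h1 : l1 > 0) (h2 : 0 > l2)
    (hden : ∀ ε : ℝ, 0 ≤ ε → 0 < t2 * ε ^ 2 + γ * (t1 + t2) * ε + t1)
    (lam : ℝ → ℝ)
    (hlam : ∀ ε, lam ε =
      (l1 * t2 * ε ^ 2 + γ * (l1 * t2 + l2 * t1) * ε + l2 * t1)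
        / (t2 * ε ^ 2 + γ * (t1 + t2) * ε + t1)) :
    (∀ ε : ℝ, 0 < ε → 0 < deriv lam ε) ∧
    lam 0 = l2 ∧ l2 < 0 ∧
    Tendsto lam atTop (nhds l1) ∧ 0 < l1 ∧
    ∃ e : ℝ, 0 < e ∧ lam e = 0 := by
  obtain rfl : lam = _ := funext hlam
  have hderiv (ε : ℝ) (hε : 0 ≤ ε) := hasDerivAt_quadratic_div_quadratic (l1 * t2)
    (γ * (l1 * t2 + l2 * t1)) (l2 * t1) t2 (γ * (t1 + t2)) t1 ε (hden ε hε).ne'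
  have hlam0 : (l1 * t2 * 0 ^ 2 + γ * (l1 * t2 + l2 * t1) * 0 + l2 * t1)
      / (t2 * 0 ^ 2 + γ * (t1 + t2) * 0 + t1) = l2 := by
    simpa using mul_div_cancel_right₀ l2 (left_ne_zero_of_mul ht.ne')
  have hlim := tendsto_quadratic_div_quadratic_atTop (l1 * t2) (γ * (l1 * t2 + l2 * t1))
    (l2 * t1) t2 (γ * (t1 + t2)) t1 (right_ne_zero_of_mul ht.ne')
  rw [mul_div_cancel_right₀ l1 (right_ne_zero_of_mul ht.ne')] at hlim
  refine ⟨fun ε hε => ?_, hlam0, h2, hlim, h1, ?_⟩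
  · rw [(hderiv ε hε.le).deriv]
    refine div_pos ?_ (pow_pos (hden ε hε.le) 2)
    have hl : 0 < l1 - l2 := by linarith
    convert mul_pos (mul_pos ht hl) (by positivity : 0 < γ * ε ^ 2 + 2 * ε + γ) using 1
    ring
  · exact exists_gt_eq_of_continuousOn_Ici_of_tendsto
      (fun x hx => (hderiv x hx).continuousAt.continuousWithinAt) (hlam0.trans_lt h2) hlim h1
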